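/- Let (A,≺,≻,α) be a Hom-Leibniz dendriform algebra over a field K and let (l≺, r≺, l≻, r≻, β, V) be a bimodule of it. Then the direct sum A ⊕ V, equipped with the operations (x₁+v₁) ≺' (x₂+v₂) = x₁≺x₂ + l≺(x₁)v₂ + r≺(x₂)v₁, (x₁+v₁) ≻' (x₂+v₂) = x₁≻x₂ + l≻(x₁)v₂ + r≻(x₂)v₁ and the linear map (α⊕β)(x+v) = α(x)+β(v), is a Hom-Leibniz dendriform algebra. -/
import Mathlib


/-- A Hom-Leibniz dendriform algebra `(A, ≺, ≻, α)`, with `p = ≺` and `s = ≻`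
and `[x,y] = x≺y + x≻y`. -/
def HomLeibnizDendriform {K A : Type*} [Field K] [AddCommGroup A] [Module K A]
    (p s : A →ₗ[K] A →ₗ[K] A) (α : A →ₗ[K] A) : Prop :=
  (∀ x y z : A, s (p x y + s x y) (α z) = s (α x) (s y z) - s (α y) (s x z)) ∧
  (∀ x y z : A, s (α x) (p y z) = p (s x y) (α z) + p (α y) (p x z + s x z)) ∧
  (∀ x y z : A, p (α x) (p y z + s y z) = p (p x y) (α z) + s (α y) (p x z))

/-- A bimodule `(l≺, r≺, l≻, r≻, β, V)` of a Hom-Leibniz dendriform algebra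
`(A, ≺, ≻, α)` (here `p = ≺`, `s = ≻`, `lp = l≺`, `rp = r≺`, `ls = l≻`,
`rs = r≻`). -/
def HomLeibnizDendriformBimodule {K A V : Type*} [Field K]
    [AddCommGroup A] [Module K A] [AddCommGroup V] [Module K V]
    (p s : A →ₗ[K] A →ₗ[K] A) (α : A →ₗ[K] A)
    (lp rp ls rs : A →ₗ[K] V →ₗ[K] V) (β : V →ₗ[K] V) : Prop :=
  (∀ x y v, ls (p x y + s x y) (β v) = ls (α x) (ls y v) - ls (α y) (ls x v)) ∧
  (∀ x y v, rs (α y) (lp x v + ls x v) = ls (α x) (rs y v) - rs (s x y) (β v)) ∧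
  (∀ x y v, rs (α y) (rp x v + rs x v) = rs (s x y) (β v) - ls (α x) (rs y v)) ∧
  (∀ x y v, ls (α x) (lp y v) = lp (s x y) (β v) + lp (α y) (lp x v + ls x v)) ∧
  (∀ x y v, ls (α x) (rp y v) = rp (α y) (ls x v) + rp (p x y + s x y) (β v)) ∧
  (∀ x y v, rs (p x y) (β v) = rp (α y) (rs x v) + lp (α x) (rp y v + rs y v)) ∧
  (∀ x y v, lp (α x) (lp y v + ls y v) = lp (p x y) (β v) + ls (α y) (lp x v)) ∧
  (∀ x y v, lp (α x) (rp y v + rs y v) = rp (α y) (lp x v) + rs (p x y) (β v)) ∧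
  (∀ x y v, rp (p x y + s x y) (β v) = rp (α y) (rp x v) + ls (α x) (rp y v)) ∧
  (∀ x v, β (lp x v) = lp (α x) (β v)) ∧
  (∀ x v, β (rp x v) = rp (α x) (β v)) ∧
  (∀ x v, β (ls x v) = ls (α x) (β v)) ∧
  (∀ x v, β (rs x v) = rs (α x) (β v))

/-- The operations `≺'`, `≻'` and the map `α ⊕ β` on the direct sum `A ⊕ V`. -/
def dsPrec {K A V : Type*} [Field K] [AddCommGroup A] [Module K A]
    [AddCommGroup V] [Module K V] (p : A →ₗ[K] A →ₗ[K] A)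
    (lp rp : A →ₗ[K] V →ₗ[K] V) : A × V → A × V → A × V :=
  fun u w => (p u.1 w.1, lp u.1 w.2 + rp w.1 u.2)

def dsSucc {K A V : Type*} [Field K] [AddCommGroup A] [Module K A]
    [AddCommGroup V] [Module K V] (s : A →ₗ[K] A →ₗ[K] A)
    (ls rs : A →ₗ[K] V →ₗ[K] V) : A × V → A × V → A × V :=
  fun u w => (s u.1 w.1, ls u.1 w.2 + rs w.1 u.2)

def dsMap {K A V : Type*} [Field K] [AddCommGroup A] [Module K A]
    [AddCommGroup V] [Module K V] (α : A →ₗ[K] A) (β : V →ₗ[K] V) :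
    A × V → A × V :=
  fun u => (α u.1, β u.2)

/-- the direct sum of a Hom-Leibniz dendriform algebra with a
bimodule is a Hom-Leibniz dendriform algebra. -/
theorem homLeibnizDendriform_semidirect_sum
    {K A V : Type*} [Field K] [AddCommGroup A] [Module K A]
    [AddCommGroup V] [Module K V]
    (p s : A →ₗ[K] A →ₗ[K] A) (α : A →ₗ[K] A)
    (lp rp ls rs : A →ₗ[K] V →ₗ[K] V) (β : V →ₗ[K] V)
    (hA : HomLeibnizDendriform p s α)
    (hV : HomLeibnizDendriformBimodule p s α lp rp ls rs β) :
    (∀ u w z : A × V,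
      dsSucc s ls rs (dsPrec p lp rp u w + dsSucc s ls rs u w) (dsMap α β z) =
        dsSucc s ls rs (dsMap α β u) (dsSucc s ls rs w z) -
          dsSucc s ls rs (dsMap α β w) (dsSucc s ls rs u z)) ∧
    (∀ u w z : A × V,
      dsSucc s ls rs (dsMap α β u) (dsPrec p lp rp w z) =
        dsPrec p lp rp (dsSucc s ls rs u w) (dsMap α β z) +
          dsPrec p lp rp (dsMap α β w)
            (dsPrec p lp rp u z + dsSucc s ls rs u z)) ∧
    (∀ u w z : A × V,
      dsPrec p lp rp (dsMap α β u) (dsPrec p lp rp w z + dsSucc s ls rs w z) =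
        dsPrec p lp rp (dsPrec p lp rp u w) (dsMap α β z) +
          dsSucc s ls rs (dsMap α β w) (dsPrec p lp rp u z)) := by
  obtain ⟨hA1, hA2, hA3⟩ := hA
  obtain ⟨h1, h2, h3, h4, h5, h6, h7, h8, h9, _, _, _, _⟩ := hV
  refine ⟨fun u w z => ?_, fun u w z => ?_, fun u w z => ?_⟩ <;>
    obtain ⟨x, a⟩ := u <;> obtain ⟨y, b⟩ := w <;> obtain ⟨z, c⟩ := z <;>
    simp only [dsPrec, dsSucc, dsMap, Prod.mk_add_mk, Prod.mk_sub_mk, Prod.mk.injEq]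
  · refine ⟨hA1 x y z, ?_⟩
    have e1 := h1 x y c
    have e2 := h2 x z b
    have e3 := h3 y z a
    simp only [map_add, LinearMap.add_apply] at e1 e2 e3 ⊢
    linear_combination (norm := abel) e1 + e2 + e3
  · refine ⟨hA2 x y z, ?_⟩
    have e1 := h4 x y c
    have e2 := h5 x z b
    have e3 := h6 y z a
    simp only [map_add, LinearMap.add_apply] at e1 e2 e3 ⊢
    linear_combination (norm := abel) e1 + e2 + e3
  · refine ⟨hA3 x y z, ?_⟩
    have e1 := h7 x y c
    have e2 := h8 x z b
    have e3 := h9 y z a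
    simp only [map_add, LinearMap.add_apply] at e1 e2 e3 ⊢
    linear_combination (norm := abel) e1 + e2 + e3
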